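/- arXiv:1405.4969 — 4 statements merged into one kernel-verified Lean document; each statement's English description precedes it below -/
import Mathlib

section
/- Every one-dimensional signal with at most k change points can be represented using at most k+1 atoms of the Heaviside dictionary: if f ∈ ℝ^d (d ≥ 2) satisfies ‖Ω_DIF f‖₀ ≤ k, then there exists α ∈ ℝ^d with ‖α‖₀ ≤ k + 1 and f = D_HS α. -/
noncomputable section

/-- The `(d-1) × d` finite-difference matrix: `(OmDIF.mulVec f) i = f i - f (i+1)`. -/
def OmDIF (d : ℕ) : Matrix (Fin (d - 1)) (Fin d) ℝ :=
  fun i j => if (j : ℕ) = (i : ℕ) then 1 else if (j : ℕ) = (i : ℕ) + 1 then -1 else 0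

/-- The `d × d` Heaviside dictionary: entries are `1` iff `i ≤ j`. -/
def DHS (d : ℕ) : Matrix (Fin d) (Fin d) ℝ :=
  fun i j => if (i : ℕ) ≤ (j : ℕ) then 1 else 0

/-- The ℓ₀ "norm": number of nonzero entries of a vector. -/
def l0norm {m : ℕ} (x : Fin m → ℝ) : ℕ :=
  (Finset.univ.filter fun i => x i ≠ 0).card

theorem stmt2 (d k : ℕ) (hd : 2 ≤ d) (f : Fin d → ℝ)
    (hf : l0norm ((OmDIF d).mulVec f) ≤ k) :
    ∃ α : Fin d → ℝ, l0norm α ≤ k + 1 ∧ f = (DHS d).mulVec α := by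
  classical
  set g : ℕ → ℝ := fun n => if h : n < d then f ⟨n, h⟩ else 0 with hg
  set α : Fin d → ℝ := fun j => g j - g ((j : ℕ) + 1) with hα
  have hgf : ∀ (n : ℕ) (h : n < d), g n = f ⟨n, h⟩ := by
    intro n h; simp [hg, h]
  have hgd : g d = 0 := by simp [hg]
  -- OmDIF evaluation
  have hOm : ∀ i : Fin (d - 1), (OmDIF d).mulVec f i = g i - g ((i : ℕ) + 1) := by
    intro i
    have hi1 : (i : ℕ) < d := by omega
    have hi2 : (i : ℕ) + 1 < d := by omega
    have : ∀ j : Fin d, OmDIF d i j * f j =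
        (if j = (⟨i, hi1⟩ : Fin d) then f ⟨i, hi1⟩ else 0)
        + (if j = (⟨(i : ℕ) + 1, hi2⟩ : Fin d) then -f ⟨(i : ℕ) + 1, hi2⟩ else 0) := by
      intro j
      simp only [OmDIF, Fin.ext_iff]
      by_cases h1 : (j : ℕ) = (i : ℕ)
      · have h2 : ¬ ((j : ℕ) = (i : ℕ) + 1) := by omega
        have : j = (⟨i, hi1⟩ : Fin d) := Fin.ext h1
        simp [h1, h2, this, Fin.ext_iff]
      · by_cases h2 : (j : ℕ) = (i : ℕ) + 1
        · have : j = (⟨(i : ℕ) + 1, hi2⟩ : Fin d) := Fin.ext h2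
          simp [h1, h2, this, Fin.ext_iff]
        · simp [h1, h2]
    rw [Matrix.mulVec, dotProduct]
    rw [Finset.sum_congr rfl (fun j _ => this j), Finset.sum_add_distrib]
    simp [hgf _ hi1, hgf _ hi2]
    ring
  -- telescoping
  have tel : ∀ (n m : ℕ), (∑ j ∈ Finset.Ico m (m + n), (g j - g (j + 1))) = g m - g (m + n) := by
    intro n
    induction n with
    | zero => simp
    | succ n ih =>
      intro m
      rw [← Nat.add_assoc, Finset.sum_Ico_succ_top (Nat.le_add_right _ _), ih]
      ring
  refine ⟨α, ?_, ?_⟩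
  · -- cardinality bound
    set S : Finset (Fin d) := Finset.univ.filter fun j => α j ≠ 0 with hS
    set a : Fin d := ⟨d - 1, by omega⟩ with ha
    have hsub : S ⊆ insert a (S.erase a) := by
      intro x hx
      by_cases hxa : x = a
      · simp [hxa]
      · simp [Finset.mem_insert, Finset.mem_erase, hxa, hx]
    have e : Fin d → Fin (d - 1) := fun j => ⟨min j (d - 2), by omega⟩
    have hcard : (S.erase a).card ≤ l0norm ((OmDIF d).mulVec f) := by
      unfold l0norm
      apply Finset.card_le_card_of_injOn (fun j : Fin d => (⟨min (j : ℕ) (d - 2), by omega⟩ : Fin (d - 1)))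
      · intro j hj
        simp only [Finset.mem_coe, Finset.mem_erase, hS, Finset.mem_filter] at hj
        have hja : (j : ℕ) ≠ d - 1 := fun h => hj.1 (Fin.ext h)
        have hjlt : (j : ℕ) < d - 1 := by omega
        have hmin : min (j : ℕ) (d - 2) = (j : ℕ) := by omega
        simp only [Finset.mem_coe, l0norm, Finset.mem_filter, Finset.mem_univ, true_and]
        rw [hOm]
        simpa [hmin] using hj.2.2
      · intro x hx y hy hxy
        simp only [Finset.mem_coe, Finset.mem_erase, hS, Finset.mem_filter] at hx hy
        have hx1 : (x : ℕ) < d - 1 := by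
          have : (x : ℕ) ≠ d - 1 := fun h => hx.1 (Fin.ext h); omega
        have hy1 : (y : ℕ) < d - 1 := by
          have : (y : ℕ) ≠ d - 1 := fun h => hy.1 (Fin.ext h); omega
        have := congrArg (Fin.val) hxy
        simp only [Fin.val_mk] at this
        apply Fin.ext; omega
    calc l0norm α = S.card := rfl
      _ ≤ (insert a (S.erase a)).card := Finset.card_le_card hsub
      _ ≤ (S.erase a).card + 1 := Finset.card_insert_le _ _
      _ ≤ k + 1 := by omega
  · funext i
    have hid : (i : ℕ) + (d - i) = d := by omega
    have hF : ∀ j : Fin d, DHS d i j * α j =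
        (fun n : ℕ => (if (i : ℕ) ≤ n then (1:ℝ) else 0) * (g n - g (n + 1))) (j : ℕ) := by
      intro j; simp [DHS, hα]
    have : (DHS d).mulVec α i = ∑ n ∈ Finset.range d,
        (if (i : ℕ) ≤ n then (1:ℝ) else 0) * (g n - g (n + 1)) := by
      rw [Matrix.mulVec, dotProduct, Finset.sum_congr rfl (fun j _ => hF j)]
      exact Fin.sum_univ_eq_sum_range (fun n => (if (i : ℕ) ≤ n then (1:ℝ) else 0) * (g n - g (n + 1))) d
    rw [this]
    have hfilt : (Finset.range d).filter (fun n => (i : ℕ) ≤ n) = Finset.Ico (i : ℕ) d := by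
      ext n; simp [Finset.mem_filter, Finset.mem_Ico, Finset.mem_range]; omega
    have h2 : (∑ n ∈ Finset.range d, (if (i : ℕ) ≤ n then (1:ℝ) else 0) * (g n - g (n + 1)))
        = ∑ n ∈ Finset.Ico (i : ℕ) d, (g n - g (n + 1)) := by
      rw [← hfilt, Finset.sum_filter]
      refine Finset.sum_congr rfl fun n _ => ?_
      by_cases h : (i : ℕ) ≤ n <;> simp [h]
    rw [h2]
    have h3 := tel (d - i) i
    rw [hid] at h3
    rw [h3, hgd, hgf i i.isLt]
    simp
end
end

section
/- A vector f ∈ ℝ^d (d ≥ 2) is a piecewise polynomial function of order n with at most k jumps if and only if there exist coefficient vectors b_0, b_1, …, b_n ∈ ℝ^d such that f = Σ_{i=0}^n Z^i b_i and the coefficients are jointly k-sparse under the finite-difference operator, i.e. the set {j ∈ {1,…,d−1} : (Ω_DIF b_i)_j ≠ 0 for some 0 ≤ i ≤ n} has at most k elements (equivalently, ‖Σ_{i=0}^n |Ω_DIF b_i|‖₀ ≤ k, where |·| is taken entrywise). -/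
noncomputable section

open scoped BigOperators

/-- `f ∈ ℝ^d` (with entries indexed `1,…,d`, i.e. entry `i : Fin d` is position
`(i : ℕ) + 1`) is a piecewise polynomial function of order `n` with at most `k`
jumps: there are breakpoints `0 = t 0 < t 1 < ⋯ < t j < t (j+1) = d` with
`j ≤ k` and polynomials `p 0, …, p j` of degree at most `n` such that
`f i = p l (i)` whenever `t l < i ≤ t (l+1)` (1-indexed `i`). -/
def IsPwPoly (d n k : ℕ) (f : Fin d → ℝ) : Prop :=
  ∃ j : ℕ, j ≤ k ∧ ∃ t : ℕ → ℕ, t 0 = 0 ∧ t (j + 1) = d ∧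
    (∀ l, l ≤ j → t l < t (l + 1)) ∧
    ∃ p : ℕ → Polynomial ℝ,
      (∀ l, l ≤ j → (p l).natDegree ≤ n) ∧
      (∀ l, l ≤ j → ∀ i : Fin d, t l < (i : ℕ) + 1 → (i : ℕ) + 1 ≤ t (l + 1) →
        f i = (p l).eval (((i : ℕ) + 1 : ℕ) : ℝ))

lemma omdif_mulVec {d : ℕ} (g : Fin d → ℝ) (j : Fin (d - 1)) :
    (OmDIF d).mulVec g j =
      g ⟨j, by have := j.isLt; omega⟩ - g ⟨(j : ℕ) + 1, by have := j.isLt; omega⟩ := by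
  classical
  have h1 : ((j : ℕ)) < d := by have := j.isLt; omega
  have h2 : ((j : ℕ) + 1) < d := by have := j.isLt; omega
  unfold Matrix.mulVec dotProduct OmDIF
  have : ∀ x : Fin d,
      (if (x : ℕ) = (j : ℕ) then (1:ℝ) else if (x : ℕ) = (j : ℕ) + 1 then -1 else 0) * g x
        = (if x = ⟨j, h1⟩ then g x else 0) + (if x = ⟨(j:ℕ)+1, h2⟩ then -g x else 0) := by
    intro x
    by_cases hx : (x : ℕ) = (j : ℕ)
    · have : x = ⟨j, h1⟩ := Fin.ext hx
      subst this; simp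
    · by_cases hx2 : (x : ℕ) = (j : ℕ) + 1
      · have : x = ⟨(j:ℕ)+1, h2⟩ := Fin.ext hx2
        subst this
        have e1 : (⟨(j:ℕ)+1, h2⟩ : Fin d) ≠ ⟨j, h1⟩ := by
          intro h; have := congrArg Fin.val h; simp at this
        simp [hx, hx2, e1]
      · have e1 : x ≠ ⟨j, h1⟩ := fun h => hx (by rw [h])
        have e2 : x ≠ ⟨(j:ℕ)+1, h2⟩ := fun h => hx2 (by rw [h])
        simp [hx, hx2, e1, e2]
  simp only [this, Finset.sum_add_distrib, Finset.sum_ite_eq', Finset.mem_univ, if_true]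
  ring

lemma consec_strictMono (t : ℕ → ℕ) (J : ℕ) (h : ∀ l, l ≤ J → t l < t (l + 1)) :
    ∀ a b, a < b → b ≤ J + 1 → t a < t b := by
  intro a b
  induction b with
  | zero => omega
  | succ m ih =>
    intro hab hb
    rcases Nat.lt_or_ge a m with h1 | h1
    · exact lt_trans (ih h1 (by omega)) (h m (by omega))
    · have : a = m := by omega
      subst this; exact h a (by omega)

theorem stmt3 (d n k : ℕ) (hd : 2 ≤ d) (f : Fin d → ℝ) :
    IsPwPoly d n k f ↔
      ∃ b : Fin (n + 1) → Fin d → ℝ,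
        (∀ i : Fin d, f i = ∑ l : Fin (n + 1),
            (((i : ℕ) + 1 : ℕ) : ℝ) ^ (l : ℕ) * b l i) ∧
        (Finset.univ.filter fun j : Fin (d - 1) =>
            ∃ l : Fin (n + 1), (OmDIF d).mulVec (b l) j ≠ 0).card ≤ k := by
  classical
  constructor
  · -- forward
    rintro ⟨J, hJk, t, ht0, htd, hts, p, hdeg, hval⟩
    set piece : ℕ → ℕ := fun m => Nat.findGreatest (fun l => t l < m + 1) J with hpiece
    have hp0 : ∀ m, t (piece m) < m + 1 := by
      intro m
      exact Nat.findGreatest_spec (P := fun l => t l < m + 1) (Nat.zero_le J) (by omega)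
    have hple : ∀ m, piece m ≤ J := fun m => Nat.findGreatest_le J
    have hp1 : ∀ m, m < d → m + 1 ≤ t (piece m + 1) := by
      intro m hm
      rcases Nat.lt_or_ge (piece m) J with h1 | h1
      · by_contra hcon
        have := Nat.findGreatest_is_greatest (P := fun l => t l < m + 1)
          (by omega : piece m < piece m + 1) (by omega)
        exact this (by omega)
      · have : piece m = J := le_antisymm (hple m) h1
        rw [this, htd]; omega
    have hpmono : ∀ m1 m2, m1 ≤ m2 → piece m1 ≤ piece m2 := by
      intro m1 m2 h12
      exact Nat.le_findGreatest (hple m1) (by have := hp0 m1; omega)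
    set bb : Fin (n+1) → Fin d → ℝ :=
      fun m i => (p (piece (i : ℕ))).coeff (m : ℕ) with hbb
    refine ⟨bb, ?_, ?_⟩
    · intro i
      have hdlt : (p (piece (i : ℕ))).natDegree < n + 1 :=
        Nat.lt_succ_of_le (hdeg _ (hple _))
      have := hval (piece (i:ℕ)) (hple _) i (hp0 _) (hp1 _ i.isLt)
      rw [this, Polynomial.eval_eq_sum_range' hdlt]
      rw [← Fin.sum_univ_eq_sum_range
        (fun l => (p (piece (i:ℕ))).coeff l * ((((i:ℕ) + 1 : ℕ)) : ℝ) ^ l) (n+1)]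
      apply Finset.sum_congr rfl
      intro m _
      simp only [hbb]
      ring
    · -- cardinality
      set S := (Finset.univ.filter fun j : Fin (d - 1) =>
            ∃ l : Fin (n + 1), (OmDIF d).mulVec (bb l) j ≠ 0) with hS
      have key : ∀ j' ∈ S, piece (j' : ℕ) < piece ((j' : ℕ) + 1) := by
        intro j' hj'
        rw [hS, Finset.mem_filter] at hj'
        obtain ⟨-, m, hm⟩ := hj'
        rw [omdif_mulVec] at hm
        have hm2 : (p (piece ((j' : ℕ)))).coeff (m : ℕ)
            - (p (piece ((j' : ℕ) + 1))).coeff (m : ℕ) ≠ 0 := by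
          simpa [hbb] using hm
        have hne : piece (j' : ℕ) ≠ piece ((j' : ℕ) + 1) := by
          intro he
          apply hm2
          rw [he]
          ring
        exact lt_of_le_of_ne (hpmono _ _ (by omega)) hne
      have hmaps : ∀ j' ∈ S, piece ((j' : ℕ) + 1) ∈ Finset.Icc 1 J := by
        intro j' hj'
        rw [Finset.mem_Icc]
        exact ⟨by have := key j' hj'; omega, hple _⟩
      have hinj : Set.InjOn (fun j' : Fin (d-1) => piece ((j' : ℕ) + 1)) S := by
        intro a ha b hb hab
        by_contra hne
        have hab' : piece ((a : ℕ) + 1) = piece ((b : ℕ) + 1) := hab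
        rcases Ne.lt_or_gt (fun h : a = b => hne h) with h | h
        · have h1 : (a : ℕ) + 1 ≤ (b : ℕ) := by
            have := Fin.lt_iff_val_lt_val.mp h; omega
          have := lt_of_le_of_lt (hpmono _ _ h1) (key b hb)
          omega
        · have h1 : (b : ℕ) + 1 ≤ (a : ℕ) := by
            have := Fin.lt_iff_val_lt_val.mp h; omega
          have := lt_of_le_of_lt (hpmono _ _ h1) (key a ha)
          omega
      calc S.card ≤ (Finset.Icc 1 J).card :=
            Finset.card_le_card_of_injOn _ hmaps hinj
        _ = J := by simp
        _ ≤ k := hJk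
  · -- backward
    rintro ⟨b, hf, hcard⟩
    set S := (Finset.univ.filter fun j : Fin (d - 1) =>
          ∃ l : Fin (n + 1), (OmDIF d).mulVec (b l) j ≠ 0) with hS
    set s := S.sort (· ≤ ·) with hs
    have hlen : s.length = S.card := Finset.length_sort _
    set J := S.card with hJ
    have hsort : List.Pairwise (· < ·) s := S.sortedLT_sort.pairwise
    set t : ℕ → ℕ := fun l =>
      if h : 1 ≤ l ∧ l ≤ J then
        ((s.get ⟨l - 1, by rw [hlen]; omega⟩ : Fin (d - 1)) : ℕ) + 1
      else if l = 0 then 0 else d with ht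
    have ht0 : t 0 = 0 := by simp [ht]
    have htd : t (J + 1) = d := by
      simp only [ht]
      rw [dif_neg (by omega), if_neg (by omega)]
    have htlt : ∀ l, l ≤ J → t l < t (l + 1) := by
      intro l hl
      rcases Nat.eq_zero_or_pos l with h0 | h0
      · subst h0
        rw [ht0]
        simp only [ht]
        split
        · omega
        · split <;> omega
      · have htl : t l = ((s.get ⟨l - 1, by rw [hlen]; omega⟩ : Fin (d-1)) : ℕ) + 1 := by
          simp only [ht]; rw [dif_pos ⟨h0, hl⟩]
        rcases Nat.lt_or_ge l J with h1 | h1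
        · have htl1 : t (l+1) = ((s.get ⟨l, by rw [hlen]; omega⟩ : Fin (d-1)) : ℕ) + 1 := by
            simp only [ht]; rw [dif_pos ⟨by omega, by omega⟩]
            rfl
          rw [htl, htl1]
          have := hsort.rel_get_of_lt
            (a := ⟨l - 1, by rw [hlen]; omega⟩) (b := ⟨l, by rw [hlen]; omega⟩)
            (by simp [Fin.lt_iff_val_lt_val]; omega)
          have := Fin.lt_iff_val_lt_val.mp this
          omega
        · have hlJ : l = J := by omega
          have htl1 : t (l+1) = d := by
            simp only [ht]; rw [dif_neg (by omega), if_neg (by omega)]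
          rw [htl, htl1]
          have := (s.get ⟨l - 1, by rw [hlen]; omega⟩).isLt
          omega
      -- done
    have htmono := consec_strictMono t J htlt
    -- membership of S elements as breakpoints
    have hmem_t : ∀ j' : Fin (d - 1), j' ∈ S → ∃ r, 1 ≤ r ∧ r ≤ J ∧ t r = (j' : ℕ) + 1 := by
      intro j' hj'
      have : j' ∈ s := (Finset.mem_sort _).mpr hj'
      obtain ⟨⟨idx, hidx⟩, hget⟩ := List.mem_iff_get.mp this
      refine ⟨idx + 1, by omega, by rw [hlen] at hidx; omega, ?_⟩
      simp only [ht]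
      rw [dif_pos ⟨by omega, by rw [hlen] at hidx; omega⟩]
      simp only [Nat.add_sub_cancel]
      rw [hget]
    -- constancy on pieces
    have hnochange : ∀ (i : ℕ) (h1 : i + 1 < d), ∀ l ≤ J,
        t l < i + 1 → i + 2 ≤ t (l + 1) →
        ∀ m : Fin (n+1), b m ⟨i, by omega⟩ = b m ⟨i + 1, h1⟩ := by
      intro i h1 l hl htl htl1 m
      have hi : i < d - 1 := by omega
      have hnot : (⟨i, hi⟩ : Fin (d-1)) ∉ S := by
        intro hin
        obtain ⟨r, hr1, hr2, hr3⟩ := hmem_t _ hin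
        simp only at hr3
        have hlt1 : t l < t r := by omega
        have hlt2 : t r < t (l + 1) := by omega
        have e1 : l < r := by
          by_contra hc
          have hrl : r ≤ l := by omega
          rcases eq_or_lt_of_le hrl with h | h
          · subst h; omega
          · have := htmono r l h (by omega); omega
        have e2 : r < l + 1 := by
          by_contra hc
          have hlr : l + 1 ≤ r := by omega
          rcases eq_or_lt_of_le hlr with h | h
          · subst h; omega
          · have := htmono (l+1) r h (by omega); omega
        omega
      rw [hS, Finset.mem_filter] at hnot
      push_neg at hnot
      have := hnot (Finset.mem_univ _) m
      rw [omdif_mulVec] at this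
      have : b m ⟨i, by omega⟩ - b m ⟨i + 1, h1⟩ = 0 := by
        simpa using this
      linarith [this]
    have hconst : ∀ l ≤ J, ∀ (c : ℕ) (i1 i2 : Fin d), (i2 : ℕ) = (i1 : ℕ) + c →
        t l < (i1 : ℕ) + 1 → (i2 : ℕ) + 1 ≤ t (l + 1) →
        ∀ m : Fin (n+1), b m i1 = b m i2 := by
      intro l hl c
      induction c with
      | zero =>
        intro i1 i2 he _ _ m
        have : i1 = i2 := Fin.ext (by omega)
        rw [this]
      | succ c ih =>
        intro i1 i2 he h1 h2 m
        have hmid : (i1 : ℕ) + c < d := by have := i2.isLt; omega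
        have h1d : (i1 : ℕ) + c + 1 < d := by have := i2.isLt; omega
        have step : b m ⟨(i1 : ℕ) + c, by omega⟩ = b m ⟨(i1:ℕ) + c + 1, h1d⟩ := by
          apply hnochange _ h1d l hl
          · have := htmono l (l+1) (by omega) (by omega); omega
          · omega
        have prev : b m i1 = b m ⟨(i1 : ℕ) + c, by omega⟩ := by
          apply ih i1 ⟨(i1:ℕ) + c, by omega⟩ (by simp) h1
          simp only []
          omega
        rw [prev, step]
        congr 1
        exact Fin.ext (by simp; omega)
    -- assemble
    have hJk : J ≤ k := hcard
    have htld : ∀ l, l ≤ J → t l < d := by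
      intro l hl
      have := htmono l (J + 1) (by omega) (le_refl _)
      rw [htd] at this; exact this
    set pp : ℕ → Polynomial ℝ := fun l =>
      if h : l ≤ J then
        ∑ m : Fin (n+1), Polynomial.C (b m ⟨t l, htld l h⟩) * Polynomial.X ^ (m : ℕ)
      else 0 with hpp
    refine ⟨J, hJk, t, ht0, htd, htlt, pp, ?_, ?_⟩
    · intro l hl
      simp only [hpp]
      rw [dif_pos hl]
      apply Polynomial.natDegree_sum_le_of_forall_le
      intro m _
      apply le_trans Polynomial.natDegree_mul_le
      simp only [Polynomial.natDegree_C, Polynomial.natDegree_X_pow, zero_add]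
      omega
    · intro l hl i hil hiu
      simp only [hpp]
      rw [dif_pos hl, hf i]
      rw [Polynomial.eval_finset_sum]
      apply Finset.sum_congr rfl
      intro m _
      simp only [Polynomial.eval_mul, Polynomial.eval_C, Polynomial.eval_pow,
        Polynomial.eval_X]
      rw [mul_comm]
      congr 1
      symm
      apply hconst l hl ((i : ℕ) - t l) ⟨t l, htld l hl⟩ i
      · simp only []; omega
      · simp only []; omega
      · exact hiu
end
end

section
/- Stable recovery under adversarial bounded noise: suppose M ∈ ℝ^{m×d} satisfies the P_n-RIP of order n with constant δ_{2k} < 1 at sparsity level 2k, let f be a piecewise polynomial function of order n with at most k jumps, and let g = Mf + e. Then every piecewise polynomial function f̂ of order n with at most k jumps that is feasible, i.e. satisfies ‖g − M f̂‖₂ ≤ ‖e‖₂, obeys the error bound ‖f̂ − f‖₂ ≤ (2/√(1 − δ_{2k})) · ‖e‖₂. -/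
noncomputable section

open scoped BigOperators

/-- Squared Euclidean norm. -/
def sqnorm {m : ℕ} (x : Fin m → ℝ) : ℝ := ∑ i, (x i) ^ 2

/-- `M` satisfies the polynomial restricted isometry property of order `n`
with constant `δ` at sparsity level `k`:
`(1-δ)‖f‖₂² ≤ ‖Mf‖₂² ≤ (1+δ)‖f‖₂²` for every piecewise polynomial function `f`
of order `n` with at most `k` jumps. -/
def PnRIP (m d n k : ℕ) (M : Matrix (Fin m) (Fin d) ℝ) (δ : ℝ) : Prop :=
  ∀ f : Fin d → ℝ, IsPwPoly d n k f →
    (1 - δ) * sqnorm f ≤ sqnorm (M.mulVec f) ∧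
      sqnorm (M.mulVec f) ≤ (1 + δ) * sqnorm f

/-- A step function (piecewise polynomial) difference is piecewise polynomial with
the sum of the jump numbers. -/
lemma IsPwPoly.sub {d n k k' : ℕ} {f g : Fin d → ℝ}
    (hf : IsPwPoly d n k f) (hg : IsPwPoly d n k' g) :
    IsPwPoly d n (k + k') (f - g) := by
  classical
  obtain ⟨j, hj, t, ht0, htd, htm, p, hpdeg, hpev⟩ := hf
  obtain ⟨j', hj', s, hs0, hsd, hsm, q, hqdeg, hqev⟩ := hg
  -- monotonicity of the breakpoint sequences on their relevant ranges
  have tmono : ∀ a b, a ≤ b → b ≤ j + 1 → t a ≤ t b := by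
    intro a b hab hbj
    induction b with
    | zero => simp_all
    | succ b ih =>
      rcases Nat.lt_or_ge a (b+1) with h | h
      · have : t b < t (b+1) := htm b (Nat.lt_succ_iff.mp hbj)
        exact le_trans (ih (Nat.lt_succ_iff.mp h) (le_trans (Nat.le_succ b) hbj)) this.le
      · have : a = b + 1 := le_antisymm hab h
        simp [this]
  have smono : ∀ a b, a ≤ b → b ≤ j' + 1 → s a ≤ s b := by
    intro a b hab hbj
    induction b with
    | zero => simp_all
    | succ b ih =>
      rcases Nat.lt_or_ge a (b+1) with h | h
      · have : s b < s (b+1) := hsm b (Nat.lt_succ_iff.mp hbj)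
        exact le_trans (ih (Nat.lt_succ_iff.mp h) (le_trans (Nat.le_succ b) hbj)) this.le
      · have : a = b + 1 := le_antisymm hab h
        simp [this]
  have hd0 : 0 < d := by
    have h1 : t 0 < t 1 := htm 0 (Nat.zero_le _)
    have h2 : t 1 ≤ t (j+1) := tmono 1 (j+1) (by omega) le_rfl
    omega
  set A : Finset ℕ := (Finset.range (j+2)).image t with hA
  set B : Finset ℕ := (Finset.range (j'+2)).image s with hB
  set T : Finset ℕ := A ∪ B with hT
  have h0T : (0 : ℕ) ∈ T := by
    apply Finset.mem_union_left
    exact Finset.mem_image.mpr ⟨0, by simp, ht0⟩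
  have hdT : d ∈ T := by
    apply Finset.mem_union_left
    exact Finset.mem_image.mpr ⟨j+1, by simp [Nat.lt_succ_iff], htd⟩
  have hTle : ∀ x ∈ T, x ≤ d := by
    intro x hx
    rcases Finset.mem_union.mp hx with hx | hx
    · obtain ⟨a, ha, rfl⟩ := Finset.mem_image.mp hx
      have := tmono a (j+1) (by simpa [Nat.lt_succ_iff] using ha) le_rfl
      omega
    · obtain ⟨a, ha, rfl⟩ := Finset.mem_image.mp hx
      have := smono a (j'+1) (by simpa [Nat.lt_succ_iff] using ha) le_rfl
      omega
  have hcard : T.card ≤ j + j' + 2 := by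
    have h1 : A.card ≤ j + 2 := le_trans (Finset.card_image_le) (by simp)
    have h2 : B.card ≤ j' + 2 := le_trans (Finset.card_image_le) (by simp)
    have h3 : ({0, d} : Finset ℕ) ⊆ A ∩ B := by
      intro x hx
      simp only [Finset.mem_insert, Finset.mem_singleton] at hx
      rcases hx with rfl | rfl
      · exact Finset.mem_inter.mpr ⟨Finset.mem_image.mpr ⟨0, by simp, ht0⟩,
          Finset.mem_image.mpr ⟨0, by simp, hs0⟩⟩
      · exact Finset.mem_inter.mpr ⟨Finset.mem_image.mpr ⟨j+1, by simp [Nat.lt_succ_iff], htd⟩,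
          Finset.mem_image.mpr ⟨j'+1, by simp [Nat.lt_succ_iff], hsd⟩⟩
    have h4 : 2 ≤ (A ∩ B).card := by
      have := Finset.card_le_card h3
      rwa [Finset.card_insert_of_notMem (by simp; omega), Finset.card_singleton] at this
    have h5 := Finset.card_union_add_card_inter A B
    rw [← hT] at h5
    omega
  set L : List ℕ := T.sort (· ≤ ·) with hL
  have hLlen : L.length = T.card := Finset.length_sort _
  have hLsorted : List.Pairwise (· < ·) L := T.sortedLT_sort.pairwise
  have hget : ∀ (i₁ i₂ : Fin L.length), i₁ < i₂ → L.get i₁ < L.get i₂ :=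
    fun i₁ i₂ h => List.pairwise_iff_get.mp hLsorted i₁ i₂ h
  have hmemL : ∀ x, x ∈ L ↔ x ∈ T := fun x => Finset.mem_sort _
  have hgetle : ∀ (i₁ i₂ : Fin L.length), i₁ ≤ i₂ → L.get i₁ ≤ L.get i₂ := by
    intro i₁ i₂ h
    rcases lt_or_eq_of_le h with h | h
    · exact (hget i₁ i₂ h).le
    · rw [h]
  have hlen2 : 2 ≤ L.length := by
    rw [hLlen]
    have h3 : ({0, d} : Finset ℕ) ⊆ T := by
      intro x hx
      simp only [Finset.mem_insert, Finset.mem_singleton] at hx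
      rcases hx with rfl | rfl
      exacts [h0T, hdT]
    have := Finset.card_le_card h3
    rwa [Finset.card_insert_of_notMem (by simp; omega), Finset.card_singleton] at this
  set J : ℕ := L.length - 2 with hJ
  have hJ1 : J + 2 = L.length := by omega
  set t' : ℕ → ℕ := fun i => L.getD i d with ht'
  have ht'get : ∀ (i : ℕ) (h : i < L.length), t' i = L.get ⟨i, h⟩ := by
    intro i h
    simp only [ht']
    exact List.getD_eq_getElem L d h
  -- t' 0 = 0
  have ht'0 : t' 0 = 0 := by
    obtain ⟨i0, hi0⟩ := List.mem_iff_get.mp ((hmemL 0).mpr h0T)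
    have h0 : (0 : ℕ) < L.length := by omega
    have : L.get ⟨0, h0⟩ ≤ L.get i0 := hgetle _ _ (Fin.mk_le_mk.mpr (Nat.zero_le _))
    rw [hi0] at this
    rw [ht'get 0 h0]
    omega
  -- t' (J+1) = d
  have ht'd : t' (J + 1) = d := by
    obtain ⟨id, hid⟩ := List.mem_iff_get.mp ((hmemL d).mpr hdT)
    have hl : J + 1 < L.length := by omega
    have h1 : L.get id ≤ L.get ⟨J+1, hl⟩ := by
      apply hgetle
      have := id.2
      exact Fin.mk_le_mk.mpr (by omega) |>.trans_eq rfl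
    rw [hid] at h1
    have h2 : L.get ⟨J+1, hl⟩ ≤ d := hTle _ ((hmemL _).mp (L.get_mem _))
    rw [ht'get _ hl]
    omega
  have ht'm : ∀ l, l ≤ J → t' l < t' (l + 1) := by
    intro l hl
    have h1 : l < L.length := by omega
    have h2 : l + 1 < L.length := by omega
    rw [ht'get l h1, ht'get (l+1) h2]
    exact hget _ _ (by simp)
  -- minimality: t' (l+1) is the smallest element of T above t' l
  have hkey : ∀ l, l ≤ J → ∀ x ∈ T, t' l < x → t' (l + 1) ≤ x := by
    intro l hl x hx hlt
    obtain ⟨ix, hix⟩ := List.mem_iff_get.mp ((hmemL x).mpr hx)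
    have h1 : l < L.length := by omega
    have h2 : l + 1 < L.length := by omega
    rcases Nat.lt_or_ge ix.1 (l + 1) with h | h
    · exfalso
      have : L.get ix ≤ L.get ⟨l, h1⟩ := hgetle _ _ (Fin.mk_le_mk.mpr (by omega) |>.trans_eq rfl)
      rw [hix, ← ht'get l h1] at this
      omega
    · have : L.get ⟨l+1, h2⟩ ≤ L.get ix := hgetle _ _ (by exact Fin.mk_le_mk.mpr h |>.trans_eq rfl)
      rw [hix, ← ht'get (l+1) h2] at this
      exact this
  -- index selection
  set a : ℕ → ℕ := fun l => Nat.findGreatest (fun b => t b ≤ t' l) j with ha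
  set b : ℕ → ℕ := fun l => Nat.findGreatest (fun c => s c ≤ t' l) j' with hb
  have haj : ∀ l, a l ≤ j := fun l => Nat.findGreatest_le j
  have hbj : ∀ l, b l ≤ j' := fun l => Nat.findGreatest_le j'
  have hta : ∀ l, t (a l) ≤ t' l := fun l =>
    Nat.findGreatest_spec (P := fun c => t c ≤ t' l) (Nat.zero_le j) (by simp [ht0])
  have hsb : ∀ l, s (b l) ≤ t' l := fun l =>
    Nat.findGreatest_spec (P := fun c => s c ≤ t' l) (Nat.zero_le j') (by simp [hs0])
  have hta1 : ∀ l, l ≤ J → t' (l + 1) ≤ t (a l + 1) := by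
    intro l hl
    apply hkey l hl
    · exact Finset.mem_union_left _ (Finset.mem_image.mpr
        ⟨a l + 1, Finset.mem_range.mpr (by have := haj l; omega), rfl⟩)
    · rcases Nat.lt_or_ge (a l) j with h | h
      · by_contra hcon
        push_neg at hcon
        exact Nat.findGreatest_is_greatest (P := fun c => t c ≤ t' l)
          (Nat.lt_succ_self (a l)) (by omega) hcon
      · have haj' : a l = j := le_antisymm (haj l) h
        rw [haj', htd]
        have h1 := ht'm l hl
        have h2 : t' (l+1) ≤ d := by
          have hl1 : l + 1 < L.length := by omega
          rw [ht'get _ hl1]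
          exact hTle _ ((hmemL _).mp (L.get_mem _))
        omega
  have hsb1 : ∀ l, l ≤ J → t' (l + 1) ≤ s (b l + 1) := by
    intro l hl
    apply hkey l hl
    · exact Finset.mem_union_right _ (Finset.mem_image.mpr
        ⟨b l + 1, Finset.mem_range.mpr (by have := hbj l; omega), rfl⟩)
    · rcases Nat.lt_or_ge (b l) j' with h | h
      · by_contra hcon
        push_neg at hcon
        exact Nat.findGreatest_is_greatest (P := fun c => s c ≤ t' l)
          (Nat.lt_succ_self (b l)) (by omega) hcon
      · have hbj' : b l = j' := le_antisymm (hbj l) h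
        rw [hbj', hsd]
        have h1 := ht'm l hl
        have h2 : t' (l+1) ≤ d := by
          have hl1 : l + 1 < L.length := by omega
          rw [ht'get _ hl1]
          exact hTle _ ((hmemL _).mp (L.get_mem _))
        omega
  refine ⟨J, ?_, t', ht'0, ht'd, ht'm, fun l => p (a l) - q (b l), ?_, ?_⟩
  · have : T.card = J + 2 := by omega
    omega
  · intro l _
    exact le_trans (Polynomial.natDegree_sub_le _ _)
      (max_le (hpdeg _ (haj l)) (hqdeg _ (hbj l)))
  · intro l hl i hi1 hi2
    have hf' : f i = (p (a l)).eval (((i : ℕ) + 1 : ℕ) : ℝ) :=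
      hpev (a l) (haj l) i (lt_of_le_of_lt (hta l) hi1) (le_trans hi2 (hta1 l hl))
    have hg' : g i = (q (b l)).eval (((i : ℕ) + 1 : ℕ) : ℝ) :=
      hqev (b l) (hbj l) i (lt_of_le_of_lt (hsb l) hi1) (le_trans hi2 (hsb1 l hl))
    simp [Pi.sub_apply, hf', hg', Polynomial.eval_sub]

lemma sqrt_sqnorm_eq_norm {m : ℕ} (x : Fin m → ℝ) :
    Real.sqrt (sqnorm x) = ‖(WithLp.equiv 2 (Fin m → ℝ)).symm x‖ := by
  rw [EuclideanSpace.norm_eq]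
  congr 1
  simp [sqnorm, Real.norm_eq_abs, sq_abs]

theorem stmt7 (m d n k : ℕ) (M : Matrix (Fin m) (Fin d) ℝ) (δ : ℝ)
    (hδ : δ < 1) (hRIP : PnRIP m d n (2 * k) M δ)
    (f fhat : Fin d → ℝ) (e : Fin m → ℝ)
    (hf : IsPwPoly d n k f) (hfhat : IsPwPoly d n k fhat)
    (hfeas : Real.sqrt (sqnorm ((M.mulVec f + e) - M.mulVec fhat)) ≤
      Real.sqrt (sqnorm e)) :
    Real.sqrt (sqnorm (fhat - f)) ≤
      (2 / Real.sqrt (1 - δ)) * Real.sqrt (sqnorm e) := by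
  set h := fhat - f with hh
  have hpw : IsPwPoly d n (2 * k) h := by
    rw [two_mul]
    exact hfhat.sub hf
  have hRIPl := (hRIP h hpw).1
  -- triangle inequality: ‖Mh‖ ≤ ‖Mf + e - Mfhat‖ + ‖e‖ ≤ 2‖e‖
  have hMh : M.mulVec h = e - ((M.mulVec f + e) - M.mulVec fhat) := by
    rw [hh, Matrix.mulVec_sub]
    abel
  have htri : Real.sqrt (sqnorm (M.mulVec h)) ≤ 2 * Real.sqrt (sqnorm e) := by
    rw [hMh, sqrt_sqnorm_eq_norm]
    have : (WithLp.equiv 2 (Fin m → ℝ)).symm (e - ((M.mulVec f + e) - M.mulVec fhat)) =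
        (WithLp.equiv 2 (Fin m → ℝ)).symm e -
          (WithLp.equiv 2 (Fin m → ℝ)).symm ((M.mulVec f + e) - M.mulVec fhat) := by
      simp
    rw [this]
    calc ‖(WithLp.equiv 2 (Fin m → ℝ)).symm e -
          (WithLp.equiv 2 (Fin m → ℝ)).symm ((M.mulVec f + e) - M.mulVec fhat)‖
        ≤ ‖(WithLp.equiv 2 (Fin m → ℝ)).symm e‖ +
          ‖(WithLp.equiv 2 (Fin m → ℝ)).symm ((M.mulVec f + e) - M.mulVec fhat)‖ :=
          norm_sub_le _ _
      _ ≤ Real.sqrt (sqnorm e) + Real.sqrt (sqnorm e) := by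
          rw [← sqrt_sqnorm_eq_norm, ← sqrt_sqnorm_eq_norm]
          exact add_le_add le_rfl hfeas
      _ = 2 * Real.sqrt (sqnorm e) := by ring
  have h1δ : (0 : ℝ) < 1 - δ := by linarith
  have hsq : Real.sqrt (1 - δ) * Real.sqrt (sqnorm h) ≤ 2 * Real.sqrt (sqnorm e) := by
    rw [← Real.sqrt_mul h1δ.le]
    calc Real.sqrt ((1 - δ) * sqnorm h) ≤ Real.sqrt (sqnorm (M.mulVec h)) :=
          Real.sqrt_le_sqrt hRIPl
      _ ≤ 2 * Real.sqrt (sqnorm e) := htri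
  have hspos : 0 < Real.sqrt (1 - δ) := Real.sqrt_pos.mpr h1δ
  rw [div_mul_eq_mul_div, le_div_iff₀ hspos, mul_comm]
  linarith [hsq]
end
end

section
/- Correctness of the dynamic-programming recursion for optimal piecewise polynomial approximation: for g ∈ ℝ^d with d ≥ 2, n ≥ 0 and k ≥ 1, E_n(g[1,d], k) = min_{1 ≤ t ≤ d−1} [ E_n(g[1,t], k−1) + dist(g[t+1,d], Poly_n({t+1,…,d}))² ], where g[s,l] denotes the restriction of g to the indices s, …, l. -/
noncomputable section

open scoped BigOperators

/-- `En m n k h` is the minimal squared approximation error of `h ∈ ℝ^m` by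
piecewise polynomial functions of order `n` with at most `k` jumps. -/
def En (m n k : ℕ) (h : Fin m → ℝ) : ℝ :=
  sInf {E : ℝ | ∃ f : Fin m → ℝ, IsPwPoly m n k f ∧ E = sqnorm (h - f)}

/-- The restriction `g[1,t]` of `g ∈ ℝ^d` to its first `t` entries. -/
def restr (d : ℕ) (g : Fin d → ℝ) (t : ℕ) : Fin t → ℝ :=
  fun i => if h : (i : ℕ) < d then g ⟨i, h⟩ else 0

/-- The segment of indices `i : Fin d` whose 1-indexed position lies in
`{a+1, …, b}`. -/
def segSet (d : ℕ) (a b : ℕ) : Finset (Fin d) :=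
  Finset.univ.filter fun i => a < (i : ℕ) + 1 ∧ (i : ℕ) + 1 ≤ b

/-- The squared Euclidean distance `dist(g|_I, Poly_n(I))²`. -/
def polyFitErr (d n : ℕ) (I : Finset (Fin d)) (g : Fin d → ℝ) : ℝ :=
  sInf {E : ℝ | ∃ p : Polynomial ℝ, p.natDegree ≤ n ∧
    E = ∑ i ∈ I, (g i - p.eval (((i : ℕ) + 1 : ℕ) : ℝ)) ^ 2}

namespace Stmt10Aux

lemma enSet_bddBelow (m n k : ℕ) (h : Fin m → ℝ) :
    BddBelow {E : ℝ | ∃ f : Fin m → ℝ, IsPwPoly m n k f ∧ E = sqnorm (h - f)} := by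
  refine ⟨0, ?_⟩
  rintro E ⟨f, -, rfl⟩
  exact Finset.sum_nonneg fun i _ => sq_nonneg _

lemma isPwPoly_zero (m n k : ℕ) (hm : 1 ≤ m) : IsPwPoly m n k (fun _ => 0) := by
  refine ⟨0, Nat.zero_le _, fun l => if l = 0 then 0 else m, by simp, by simp, ?_, fun _ => 0, ?_, ?_⟩
  · intro l hl
    obtain rfl : l = 0 := Nat.le_zero.mp hl
    simpa using Nat.lt_of_lt_of_le Nat.zero_lt_one hm
  · intro l _; simp
  · intro l _ i _ _; simp

lemma enSet_nonempty (m n k : ℕ) (hm : 1 ≤ m) (h : Fin m → ℝ) :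
    Set.Nonempty {E : ℝ | ∃ f : Fin m → ℝ, IsPwPoly m n k f ∧ E = sqnorm (h - f)} :=
  ⟨_, fun _ => 0, isPwPoly_zero m n k hm, rfl⟩

lemma polySet_bddBelow (d n : ℕ) (I : Finset (Fin d)) (g : Fin d → ℝ) :
    BddBelow {E : ℝ | ∃ p : Polynomial ℝ, p.natDegree ≤ n ∧
      E = ∑ i ∈ I, (g i - p.eval (((i : ℕ) + 1 : ℕ) : ℝ)) ^ 2} := by
  refine ⟨0, ?_⟩
  rintro E ⟨p, -, rfl⟩
  exact Finset.sum_nonneg fun i _ => sq_nonneg _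

lemma polySet_nonempty (d n : ℕ) (I : Finset (Fin d)) (g : Fin d → ℝ) :
    Set.Nonempty {E : ℝ | ∃ p : Polynomial ℝ, p.natDegree ≤ n ∧
      E = ∑ i ∈ I, (g i - p.eval (((i : ℕ) + 1 : ℕ) : ℝ)) ^ 2} :=
  ⟨_, 0, by simp, rfl⟩

lemma s_mono (j : ℕ) (s : ℕ → ℕ) (hinc : ∀ l, l ≤ j → s l < s (l + 1)) :
    ∀ a b, a ≤ b → b ≤ j + 1 → s a ≤ s b := by
  intro a b
  induction b with
  | zero => intro hab _; obtain rfl : a = 0 := Nat.le_zero.mp hab; exact le_rfl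
  | succ b ih =>
      intro hab hb
      rcases Nat.eq_or_lt_of_le hab with rfl | hlt
      · exact le_rfl
      · exact le_trans (ih (by omega) (by omega)) (le_of_lt (hinc b (by omega)))

lemma s_ge (j : ℕ) (s : ℕ → ℕ) (hs0 : s 0 = 0) (hinc : ∀ l, l ≤ j → s l < s (l + 1)) :
    ∀ l, l ≤ j + 1 → l ≤ s l := by
  intro l
  induction l with
  | zero => omega
  | succ l ih => intro hl; have := hinc l (by omega); have := ih (by omega); omega

lemma segSet_eq (d t : ℕ) :
    segSet d t d = Finset.univ.filter (fun i : Fin d => ¬ ((i : ℕ) < t)) := by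
  ext i
  have := i.isLt
  simp only [segSet, Finset.mem_filter, Finset.mem_univ, true_and]
  omega

lemma sum_split (d t : ℕ) (ht : t ≤ d) (F : Fin d → ℝ) :
    ∑ i, F i = (∑ i : Fin t, F (Fin.castLE ht i)) + ∑ i ∈ segSet d t d, F i := by
  classical
  set G : ℕ → ℝ := fun m => if h : m < d then F ⟨m, h⟩ else 0 with hG
  have h1 : ∀ i : Fin d, F i = G (i : ℕ) := by
    intro i; simp [hG, i.isLt]
  rw [segSet_eq, ← Finset.sum_filter_add_sum_filter_not Finset.univ
    (fun i : Fin d => (i : ℕ) < t) F]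
  congr 1
  rw [Finset.sum_filter]
  have h2 : (∑ i : Fin d, if (i : ℕ) < t then F i else 0)
      = ∑ m ∈ Finset.range d, (if m < t then G m else 0) := by
    rw [← Fin.sum_univ_eq_sum_range (fun m => if m < t then G m else 0) d]
    exact Finset.sum_congr rfl fun i _ => by rw [h1]
  have h3 : (∑ i : Fin t, F (Fin.castLE ht i)) = ∑ m ∈ Finset.range t, G m := by
    rw [← Fin.sum_univ_eq_sum_range G t]
    exact Finset.sum_congr rfl fun i _ => by rw [h1]; rfl
  rw [h2, h3, ← Finset.sum_filter]
  congr 1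
  ext m
  simp only [Finset.mem_filter, Finset.mem_range]
  omega

lemma err_split (d t n : ℕ) (ht : t ≤ d) (g f : Fin d → ℝ) (p : Polynomial ℝ)
    (hp : ∀ i ∈ segSet d t d, f i = p.eval (((i : ℕ) + 1 : ℕ) : ℝ)) :
    sqnorm (g - f)
      = sqnorm (restr d g t - fun i : Fin t => f (Fin.castLE ht i))
        + ∑ i ∈ segSet d t d, (g i - p.eval (((i : ℕ) + 1 : ℕ) : ℝ)) ^ 2 := by
  unfold sqnorm
  rw [sum_split d t ht (fun i => ((g - f) i) ^ 2)]
  congr 1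
  · refine Finset.sum_congr rfl fun i _ => ?_
    have hi : ((i : ℕ) : ℕ) < d := lt_of_lt_of_le i.isLt ht
    have : restr d g t i = g (Fin.castLE ht i) := by
      simp [restr, hi]; rfl
    simp [this, Pi.sub_apply]
  · refine Finset.sum_congr rfl fun i hi => ?_
    rw [Pi.sub_apply, hp i hi]


lemma glue (d n k t : ℕ) (ht1 : 1 ≤ t) (htd : t ≤ d - 1) (hd : 2 ≤ d) (hk : 1 ≤ k)
    (g : Fin d → ℝ) (f1 : Fin t → ℝ) (hf1 : IsPwPoly t n (k - 1) f1)
    (p : Polynomial ℝ) (hp : p.natDegree ≤ n) :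
    ∃ f : Fin d → ℝ, IsPwPoly d n k f ∧
      sqnorm (g - f) = sqnorm (restr d g t - f1)
        + ∑ i ∈ segSet d t d, (g i - p.eval (((i : ℕ) + 1 : ℕ) : ℝ)) ^ 2 := by
  have htd' : t ≤ d := by omega
  obtain ⟨j, hj, s, hs0, hsj, hsinc, q, hqdeg, hqval⟩ := hf1
  refine ⟨fun i => if h : (i : ℕ) < t then f1 ⟨i, h⟩ else p.eval (((i : ℕ) + 1 : ℕ) : ℝ),
    ?_, ?_⟩
  · refine ⟨j + 1, by omega, fun l => if l ≤ j + 1 then s l else d, by simp [hs0],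
      by simp, ?_, fun l => if l ≤ j then q l else p, ?_, ?_⟩
    · intro l hl
      rcases Nat.lt_or_ge l (j + 1) with h | h
      · simp only [if_pos (by omega : l ≤ j + 1), if_pos (by omega : l + 1 ≤ j + 1)]
        exact hsinc l (by omega)
      · obtain rfl : l = j + 1 := by omega
        simp only [if_pos le_rfl, if_neg (by omega : ¬ (j + 1 + 1 ≤ j + 1)), hsj]
        omega
    · intro l hl
      dsimp only
      rcases Nat.lt_or_ge l (j + 1) with h | h
      · rw [if_pos (by omega : l ≤ j)]; exact hqdeg l (by omega)
      · rw [if_neg (by omega : ¬ l ≤ j)]; exact hp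
    · intro l hl i hi1 hi2
      dsimp only at hi1 hi2 ⊢
      rcases Nat.lt_or_ge l (j + 1) with h | h
      · rw [if_pos (by omega : l ≤ j + 1)] at hi1
        rw [if_pos (by omega : l + 1 ≤ j + 1)] at hi2
        have hle : s (l + 1) ≤ s (j + 1) := s_mono j s hsinc _ _ (by omega) le_rfl
        have hitop : (i : ℕ) < t := by omega
        rw [dif_pos hitop, if_pos (by omega : l ≤ j)]
        exact hqval l (by omega) ⟨(i : ℕ), hitop⟩ (by simpa using hi1) (by simpa using hi2)
      · obtain rfl : l = j + 1 := by omega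
        rw [if_pos le_rfl, hsj] at hi1
        rw [dif_neg (by omega), if_neg (by omega)]
  · have heq := err_split d t n htd' g
      (fun i => if h : (i : ℕ) < t then f1 ⟨i, h⟩ else p.eval (((i : ℕ) + 1 : ℕ) : ℝ)) p ?_
    · rw [heq]
      congr 2
      funext i
      have hilt : ((Fin.castLE htd' i : Fin d) : ℕ) < t := by simpa using i.isLt
      simp only [Pi.sub_apply]
      rw [dif_pos hilt]
      congr 1
    · intro i hi
      rw [segSet_eq] at hi
      simp only [Finset.mem_filter, Finset.mem_univ, true_and] at hi
      rw [dif_neg hi]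

lemma unglue (d n k : ℕ) (hd : 2 ≤ d) (hk : 1 ≤ k) (g f : Fin d → ℝ)
    (hf : IsPwPoly d n k f) :
    ∃ t, t ∈ Finset.Icc 1 (d - 1) ∧ ∃ f1 : Fin t → ℝ, IsPwPoly t n (k - 1) f1 ∧
      ∃ p : Polynomial ℝ, p.natDegree ≤ n ∧
        sqnorm (restr d g t - f1)
          + ∑ i ∈ segSet d t d, (g i - p.eval (((i : ℕ) + 1 : ℕ) : ℝ)) ^ 2
          = sqnorm (g - f) := by
  obtain ⟨j, hj, s, hs0, hsj, hsinc, q, hqdeg, hqval⟩ := hf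
  rcases Nat.eq_zero_or_pos j with rfl | hjpos
  · -- single polynomial, split at t = 1
    have ht : (1 : ℕ) ≤ d := by omega
    refine ⟨1, Finset.mem_Icc.mpr ⟨le_rfl, by omega⟩,
      fun i => f (Fin.castLE ht i), ?_, q 0, hqdeg 0 le_rfl, ?_⟩
    · refine ⟨0, Nat.zero_le _, fun l => if l = 0 then 0 else 1, by simp, by simp,
        ?_, fun _ => q 0, fun l _ => hqdeg 0 le_rfl, ?_⟩
      · intro l hl; obtain rfl : l = 0 := Nat.le_zero.mp hl; simp
      · intro l hl i hi1 hi2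
        obtain rfl : l = 0 := Nat.le_zero.mp hl
        simp only [if_pos rfl] at hi1
        have := hqval 0 le_rfl (Fin.castLE ht i) (by simpa [hs0] using hi1)
          (by simp only [Fin.coe_castLE]; omega)
        exact this
    · rw [← err_split d 1 n ht g f (q 0) ?_]
      intro i hi
      simp only [segSet, Finset.mem_filter, Finset.mem_univ, true_and] at hi
      exact hqval 0 le_rfl i (by omega) (by omega)
  · -- split at the last breakpoint t = s j
    have hlt : s j < d := by have := hsinc j le_rfl; omega
    have ht : s j ≤ d := le_of_lt hlt
    have ht1 : 1 ≤ s j := le_trans hjpos (s_ge j s hs0 hsinc j (by omega))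
    refine ⟨s j, Finset.mem_Icc.mpr ⟨ht1, by omega⟩,
      fun i => f (Fin.castLE ht i), ?_, q j, hqdeg j le_rfl, ?_⟩
    · refine ⟨j - 1, by omega, s, hs0, by rw [Nat.sub_add_cancel hjpos], ?_, q,
        fun l hl => hqdeg l (by omega), ?_⟩
      · intro l hl; exact hsinc l (by omega)
      · intro l hl i hi1 hi2
        exact hqval l (by omega) (Fin.castLE ht i) (by simpa using hi1)
          (by simpa using hi2)
    · rw [← err_split d (s j) n ht g f (q j) ?_]
      intro i hi
      simp only [segSet, Finset.mem_filter, Finset.mem_univ, true_and] at hi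
      exact hqval j le_rfl i hi.1 (by omega)

end Stmt10Aux

theorem stmt10 (d n k : ℕ) (hd : 2 ≤ d) (hk : 1 ≤ k) (g : Fin d → ℝ) :
    En d n k g =
      (Finset.Icc 1 (d - 1)).inf' (Finset.nonempty_Icc.mpr (by omega))
        (fun t => En t n (k - 1) (restr d g t) + polyFitErr d n (segSet d t d) g) := by
  apply le_antisymm
  · rw [Finset.le_inf'_iff]
    intro t ht
    rw [Finset.mem_Icc] at ht
    show En d n k g ≤ En t n (k - 1) (restr d g t) + polyFitErr d n (segSet d t d) g
    unfold En polyFitErr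
    rw [← sub_le_iff_le_add]
    refine le_csInf (Stmt10Aux.enSet_nonempty t n (k - 1) ht.1 (restr d g t)) ?_
    rintro a ⟨f1, hf1, rfl⟩
    rw [sub_le_iff_le_add, ← sub_le_iff_le_add']
    refine le_csInf (Stmt10Aux.polySet_nonempty d n (segSet d t d) g) ?_
    rintro b ⟨p, hp, rfl⟩
    rw [sub_le_iff_le_add']
    obtain ⟨f, hfpw, hferr⟩ := Stmt10Aux.glue d n k t ht.1 ht.2 hd hk g f1 hf1 p hp
    exact csInf_le (Stmt10Aux.enSet_bddBelow d n k g) ⟨f, hfpw, hferr.symm⟩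
  · refine le_csInf (Stmt10Aux.enSet_nonempty d n k (by omega) g) ?_
    rintro E ⟨f, hf, rfl⟩
    obtain ⟨t, htmem, f1, hf1, p, hp, heq⟩ := Stmt10Aux.unglue d n k hd hk g f hf
    refine le_trans (Finset.inf'_le _ htmem) ?_
    rw [← heq]
    exact add_le_add (csInf_le (Stmt10Aux.enSet_bddBelow _ _ _ _) ⟨f1, hf1, rfl⟩)
      (csInf_le (Stmt10Aux.polySet_bddBelow _ _ _ _) ⟨p, hp, rfl⟩)
end
end
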